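/- Let n, r be positive integers, u_1 ∈ {0,…,n−1}, u_2 ∈ {0,…,r−1}, and w ∈ ℂ. Let g := gcd(n, u_1) (with gcd(n,0) = n). Then ∑_{x ∈ {0,…,r−1}^n} e(u_1/n)^{γ(x)} · e(u_2/r)^{σ(x)} · w^{wt(x)} = ( 1 − w^{n/g} + r·w^{n/g}·𝟙{ r | (n/g)·u_2 } )^{g}. -/

import Mathlib

open scoped Classical
open Finset

/-- `e(x) = exp(2πi x)` -/
noncomputable def expu (x : ℝ) : ℂ := Complex.exp (2 * Real.pi * Complex.I * x)

/-- `γ(x) = ∑_{i=1}^{n-1} i·𝟙{x_i > x_{i+1}}` (1-indexed). -/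
noncomputable def gam {n r : ℕ} (x : Fin n → Fin r) : ℕ :=
  ∑ i : Fin n, if h : (i : ℕ) + 1 < n then
      (if (x ⟨(i : ℕ) + 1, h⟩ : ℕ) < (x i : ℕ) then (i : ℕ) + 1 else 0) else 0

/-- `σ(x) = ∑ x_i`. -/
noncomputable def sig {n r : ℕ} (x : Fin n → Fin r) : ℕ := ∑ i : Fin n, (x i : ℕ)

/-- The Hamming weight of `x`. -/
noncomputable def hwt {n r : ℕ} (x : Fin n → Fin r) : ℕ :=
  (Finset.univ.filter (fun i => (x i : ℕ) ≠ 0)).card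

/-!
Write `ζ = e(u₁/n)`, a primitive `d`-th root of unity for `d = n / g`, and give the letter `b`
the weight `t b = e(u₂/r)^b · w^[b ≠ 0]`, so that the summand is `ζ^maj(x) · ∏ t(xᵢ)` with `maj`
the major index of the word `x` (this is `γ`). Cut a word of length `n = d·g` into `g` blocks of
length `d`: the major index of a concatenation differs from the sum of those of its pieces by a
multiple of the length of the first piece, so the sum factors as the `g`-th power of the sum over
words of length `d`. For those, rotating a word by one letter lowers the major index by its number
of cyclic descents `c` modulo `d`, and `c` is invariant under rotation; hence the sum over the
words with `c` cyclic descents is fixed by multiplication with `ζ^c`, and vanishes unless `d ∣ c`.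
Since `c < d`, only words without cyclic descents, i.e. constant words, survive, which leaves
`∑_b t(b)^d`; this geometric sum is the base of the right-hand side.
-/

namespace List

variable {α : Type*} [LinearOrder α]

def descentCount : List α → ℕ
  | a :: b :: l => (if b < a then 1 else 0) + descentCount (b :: l)
  | _ => 0

def majorIndex : List α → ℕ
  | [] => 0
  | a :: l => descentCount (a :: l) + majorIndex l

def cyclicDescentCount (l : List α) : ℕ := descentCount (l ++ l.take 1)

@[simp] lemma descentCount_nil : descentCount ([] : List α) = 0 := rfl

@[simp] lemma descentCount_singleton (a : α) : descentCount [a] = 0 := rfl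

@[simp] lemma descentCount_cons_cons (a b : α) (l : List α) :
    descentCount (a :: b :: l) = (if b < a then 1 else 0) + descentCount (b :: l) := rfl

@[simp] lemma majorIndex_nil : majorIndex ([] : List α) = 0 := rfl

@[simp] lemma majorIndex_cons (a : α) (l : List α) :
    majorIndex (a :: l) = descentCount (a :: l) + majorIndex l := rfl

lemma cyclicDescentCount_cons (a : α) (l : List α) :
    cyclicDescentCount (a :: l) = descentCount (a :: l ++ [a]) := rfl

lemma descentCount_append (l₁ l₂ : List α) :
    descentCount (l₁ ++ l₂) = descentCount l₁ + descentCount (l₁.getLast?.toList ++ l₂) := by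
  induction l₁ with
  | nil => simp
  | cons a l ih =>
    cases l with
    | nil => simp
    | cons b l =>
      simp only [cons_append] at ih ⊢
      simp [ih, add_assoc]

lemma majorIndex_append (l₁ l₂ : List α) :
    majorIndex (l₁ ++ l₂) =
      majorIndex l₁ + majorIndex l₂ + l₁.length * descentCount (l₁.getLast?.toList ++ l₂) := by
  induction l₁ with
  | nil => simp
  | cons a l ih =>
    rw [cons_append, majorIndex_cons, ← cons_append, descentCount_append, ih]
    cases l with
    | nil => simp [Nat.add_comm]
    | cons b l =>
      simp only [descentCount_cons_cons, getLast?_cons_cons, majorIndex_cons, length_cons]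
      ring

lemma majorIndex_rotate_one_add_cyclicDescentCount (l : List α) :
    majorIndex (l.rotate 1) + cyclicDescentCount l ≡ majorIndex l [MOD l.length] := by
  cases l with
  | nil => rfl
  | cons a s =>
    suffices majorIndex (s ++ [a]) + cyclicDescentCount (a :: s) =
        majorIndex (a :: s) + (a :: s).length * descentCount ((a :: s).getLast?.toList ++ [a]) by
      simp only [rotate_cons_succ, rotate_zero, this, Nat.ModEq, Nat.add_mul_mod_self_left]
    rw [cyclicDescentCount_cons, majorIndex_append, descentCount_append (a :: s), majorIndex_cons]
    cases s with
    | nil => simp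
    | cons b t =>
      simp only [getLast?_cons_cons, majorIndex_cons, descentCount_singleton, majorIndex_nil,
        add_zero, length_cons]
      ring

lemma cyclicDescentCount_rotate_one (l : List α) :
    cyclicDescentCount (l.rotate 1) = cyclicDescentCount l := by
  rcases l with _ | ⟨a, _ | ⟨b, t⟩⟩
  · rfl
  · simp
  · rw [rotate_cons_succ, rotate_zero, cons_append, cyclicDescentCount_cons,
      cyclicDescentCount_cons, descentCount_append (b :: (t ++ [a])),
      descentCount_append (a :: b :: t), descentCount_cons_cons, ← cons_append,
      descentCount_append (b :: t), getLast?_cons_cons, getLast?_concat, Option.toList_some,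
      singleton_append, descentCount_cons_cons, descentCount_singleton]
    ring

lemma descentCount_eq_zero_iff : ∀ {l : List α}, descentCount l = 0 ↔ l.IsChain (· ≤ ·)
  | [] | [_] => by simp
  | a :: b :: l => by simp [descentCount_eq_zero_iff (l := b :: l), not_lt]

lemma descentCount_cons_le (a : α) (l : List α) : descentCount (a :: l) ≤ l.length := by
  induction l generalizing a with
  | nil => simp
  | cons b l ih =>
    have := ih b
    rw [descentCount_cons_cons, length_cons]
    split_ifs <;> omega

lemma descentCount_cons_eq_length_iff {a : α} {l : List α} :
    descentCount (a :: l) = l.length ↔ (a :: l).IsChain (· > ·) := by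
  induction l generalizing a with
  | nil => simp
  | cons b l ih =>
    have := descentCount_cons_le b l
    rw [descentCount_cons_cons, length_cons, isChain_cons_cons, ← ih]
    by_cases h : b < a
    · simp [h, add_comm]
    · simp only [h, if_false, zero_add, false_and, iff_false]
      omega

lemma cyclicDescentCount_lt_length {l : List α} (hl : l ≠ []) :
    cyclicDescentCount l < l.length := by
  obtain ⟨a, s, rfl⟩ := exists_cons_of_ne_nil hl
  have hle := descentCount_cons_le a (s ++ [a])
  have hne : descentCount (a :: (s ++ [a])) ≠ (s ++ [a]).length := by
    rw [Ne, descentCount_cons_eq_length_iff, isChain_iff_pairwise]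
    intro h
    exact lt_irrefl a ((pairwise_cons.mp h).1 a (by simp))
  have hlen : (s ++ [a]).length = (a :: s).length := by simp
  rw [cyclicDescentCount_cons, cons_append]
  omega

lemma cyclicDescentCount_cons_eq_zero_iff {a : α} {l : List α} :
    cyclicDescentCount (a :: l) = 0 ↔ ∀ b ∈ l, b = a := by
  rw [cyclicDescentCount_cons, descentCount_eq_zero_iff, isChain_iff_pairwise]
  constructor
  · intro h b hb
    simp only [cons_append, pairwise_cons, pairwise_append, mem_append, mem_singleton] at h
    exact le_antisymm (h.2.2.2 b hb a rfl) (h.1 b (Or.inl hb))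
  · intro h
    have hrep : a :: l ++ [a] = replicate (l.length + 2) a :=
      eq_replicate_iff.2 ⟨by simp, by simpa [or_imp] using h⟩
    rw [hrep]
    exact pairwise_replicate.2 (Or.inr le_rfl)

lemma cyclicDescentCount_ofFn_eq_zero_iff {m : ℕ} (x : Fin (m + 1) → α) :
    cyclicDescentCount (ofFn x) = 0 ↔ x = Function.const _ (x 0) := by
  rw [ofFn_succ, cyclicDescentCount_cons_eq_zero_iff, forall_mem_ofFn_iff, funext_iff,
    Fin.forall_fin_succ]
  simp

lemma majorIndex_replicate (n : ℕ) (a : α) : majorIndex (replicate n a) = 0 := by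
  induction n with
  | zero => rfl
  | succ n ih =>
    rw [replicate_succ, majorIndex_cons, ← replicate_succ, ih,
      descentCount_eq_zero_iff.2 (isChain_replicate_of_rel _ le_rfl)]

/-- Written in the shape of the summand of `gam`, with `0`-based positions. -/
def descentAt (l : List α) (i : ℕ) : ℕ :=
  if h : i + 1 < l.length then (if l[i + 1] < l[i] then 1 else 0) else 0

@[simp] lemma descentAt_cons_succ (a : α) (l : List α) (i : ℕ) :
    descentAt (a :: l) (i + 1) = descentAt l i := by
  simp [descentAt]

lemma descentCount_eq_sum (l : List α) :
    descentCount l = ∑ i ∈ Finset.range l.length, descentAt l i := by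
  induction l with
  | nil => simp
  | cons a s ih =>
    rw [length_cons, Finset.sum_range_succ']
    simp only [descentAt_cons_succ, ← ih]
    cases s <;> simp [descentAt, add_comm]

lemma majorIndex_eq_sum (l : List α) :
    majorIndex l = ∑ i ∈ Finset.range l.length, (i + 1) * descentAt l i := by
  induction l with
  | nil => simp
  | cons a s ih =>
    rw [majorIndex_cons, descentCount_eq_sum, ih, length_cons]
    simp only [add_one_mul, Finset.sum_add_distrib]
    rw [Finset.sum_range_succ' (fun i => i * descentAt (a :: s) i)]
    simp only [descentAt_cons_succ, add_one_mul, Finset.sum_add_distrib]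
    ring

section Weight

variable {R : Type*} [CommMonoid R] (ζ : R) (t : α → R)

def majorWeight (l : List α) : R := ζ ^ majorIndex l * (l.map t).prod

lemma majorWeight_append {l₁ l₂ : List α} (h : ζ ^ l₁.length = 1) :
    majorWeight ζ t (l₁ ++ l₂) = majorWeight ζ t l₁ * majorWeight ζ t l₂ := by
  simp only [majorWeight, majorIndex_append, pow_add, pow_mul, h, one_pow, mul_one, map_append,
    prod_append]
  exact mul_mul_mul_comm _ _ _ _

lemma majorWeight_rotate_one_mul {l : List α} (h : ζ ^ l.length = 1) :
    majorWeight ζ t (l.rotate 1) * ζ ^ cyclicDescentCount l = majorWeight ζ t l := by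
  have hpow : ζ ^ majorIndex (l.rotate 1) * ζ ^ cyclicDescentCount l = ζ ^ majorIndex l := by
    rw [← pow_add, pow_eq_pow_mod _ h, majorIndex_rotate_one_add_cyclicDescentCount l,
      ← pow_eq_pow_mod _ h]
  rw [majorWeight, majorWeight, ← hpow, ((rotate_perm l 1).map t).prod_eq, mul_right_comm]

lemma majorWeight_replicate (n : ℕ) (a : α) : majorWeight ζ t (replicate n a) = t a ^ n := by
  simp [majorWeight, majorIndex_replicate]

end Weight

lemma ofFn_comp_finRotate {β : Type*} {d : ℕ} (x : Fin d → β) :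
    ofFn (x ∘ finRotate d) = (ofFn x).rotate 1 := by
  apply ext_getElem (by simp)
  intro i h₁ h₂
  simp only [List.getElem_ofFn, getElem_rotate, length_ofFn, Function.comp_apply]
  congr 1
  ext
  cases d with
  | zero => simp at h₁
  | succ n =>
    simp only [length_ofFn] at h₁
    rw [coe_finRotate]
    split_ifs with h <;> simp only [Fin.ext_iff, Fin.val_last] at h
    · simp [h]
    · simp [Nat.mod_eq_of_lt (show i + 1 < n + 1 by omega)]

end List

section Sums

open List

variable {R : Type*} [CommRing R] [IsDomain R] {α : Type*} [Fintype α] [LinearOrder α]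
  {ζ : R} {d : ℕ}

lemma sum_majorWeight_ofFn_filter_eq_zero (hζ : ζ ^ d = 1) (t : α → R) {c : ℕ} (hc : ζ ^ c ≠ 1) :
    ∑ x : Fin d → α with cyclicDescentCount (ofFn x) = c, majorWeight ζ t (ofFn x) = 0 := by
  set S := ∑ x : Fin d → α with cyclicDescentCount (ofFn x) = c, majorWeight ζ t (ofFn x)
  let rot : (Fin d → α) ≃ (Fin d → α) := (finRotate d).symm.arrowCongr (Equiv.refl α)
  have hrot (x : Fin d → α) : ofFn (rot x) = (ofFn x).rotate 1 := ofFn_comp_finRotate x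
  have hS : S * ζ ^ c = S := by
    calc S * ζ ^ c
        = ∑ x : Fin d → α with cyclicDescentCount (ofFn x) = c,
            majorWeight ζ t ((ofFn x).rotate 1) * ζ ^ c := by
          rw [Finset.sum_mul]
          refine (Finset.sum_equiv rot (fun x => ?_) (fun x _ => ?_)).symm
          · simp [hrot, cyclicDescentCount_rotate_one]
          · rw [hrot]
      _ = S := Finset.sum_congr rfl fun x hx => by
          rw [← (Finset.mem_filter.1 hx).2,
            majorWeight_rotate_one_mul ζ t (by rwa [length_ofFn])]
  have : S * (ζ ^ c - 1) = 0 := by rw [mul_sub, hS, mul_one, sub_self]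
  exact (mul_eq_zero.1 this).resolve_right (sub_ne_zero.2 hc)

theorem sum_majorWeight_ofFn (hζ : IsPrimitiveRoot ζ d) (hd : 0 < d) (t : α → R) :
    ∑ x : Fin d → α, majorWeight ζ t (ofFn x) = ∑ a, t a ^ d := by
  obtain ⟨m, rfl⟩ : ∃ m, d = m + 1 := ⟨d - 1, by omega⟩
  have hmaps : ∀ x ∈ (Finset.univ : Finset (Fin (m + 1) → α)),
      cyclicDescentCount (ofFn x) ∈ Finset.range (m + 1) := fun x _ => by
    simpa using cyclicDescentCount_lt_length (l := ofFn x) (by simp)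
  have hconst : Finset.univ.filter (fun x : Fin (m + 1) → α => cyclicDescentCount (ofFn x) = 0) =
      Finset.univ.image (Function.const (Fin (m + 1))) := by
    ext x
    simp only [Finset.mem_filter, Finset.mem_univ, true_and, Finset.mem_image,
      cyclicDescentCount_ofFn_eq_zero_iff]
    exact ⟨fun h => ⟨x 0, h.symm⟩, by rintro ⟨a, rfl⟩; rfl⟩
  rw [← Finset.sum_fiberwise_of_maps_to hmaps, Finset.sum_eq_single 0, hconst,
    Finset.sum_image Function.const_injective.injOn]
  · refine Finset.sum_congr rfl fun a _ => ?_
    rw [← majorWeight_replicate ζ t, ← ofFn_const]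
    rfl
  · exact fun c hc hc0 => sum_majorWeight_ofFn_filter_eq_zero hζ.pow_eq_one t
      (hζ.pow_ne_one_of_pos_of_lt hc0 (Finset.mem_range.1 hc))
  · simp

theorem sum_majorWeight_ofFn_of_dvd (hζ : IsPrimitiveRoot ζ d) (hd : 0 < d) (t : α → R) {n : ℕ}
    (hdn : d ∣ n) : ∑ x : Fin n → α, majorWeight ζ t (ofFn x) = (∑ a, t a ^ d) ^ (n / d) := by
  obtain ⟨g, rfl⟩ := hdn
  rw [Nat.mul_div_cancel_left g hd]
  induction g with
  | zero =>
    show ∑ x : Fin 0 → α, majorWeight ζ t (ofFn x) = _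
    simp [majorWeight]
  | succ g ih =>
    have hsplit : ∑ x : Fin (d * g + d) → α, majorWeight ζ t (ofFn x) =
        ∑ p : (Fin (d * g) → α) × (Fin d → α), majorWeight ζ t (ofFn p.1 ++ ofFn p.2) :=
      (Fintype.sum_equiv (Fin.appendEquiv _ _) _ (fun x => majorWeight ζ t (ofFn x)) fun p =>
        congrArg (majorWeight ζ t) (ofFn_fin_append p.1 p.2).symm).symm
    rw [pow_succ, ← ih, ← sum_majorWeight_ofFn hζ hd t, Finset.sum_mul_sum]
    refine hsplit.trans ((Fintype.sum_prod_type _).trans ?_)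
    refine Finset.sum_congr rfl fun x _ => Finset.sum_congr rfl fun y _ => ?_
    exact majorWeight_append ζ t (by rw [length_ofFn, pow_mul, hζ.pow_eq_one, one_pow])

lemma geom_sum_eq_ite_of_pow_eq_one {β : R} {r : ℕ} (h : β ^ r = 1) :
    ∑ i ∈ Finset.range r, β ^ i = if β = 1 then (r : R) else 0 := by
  split_ifs with hβ
  · simp [hβ]
  · have := geom_sum_mul β r
    rw [h, sub_self] at this
    exact (mul_eq_zero.1 this).resolve_right (sub_ne_zero.2 hβ)

lemma sum_fin_pow_mul_ite_pow {η : R} {r : ℕ} (hr : 0 < r) (hη : η ^ r = 1) (w : R) :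
    ∑ b : Fin r, (η ^ (b : ℕ) * if (b : ℕ) ≠ 0 then w else 1) ^ d =
      1 - w ^ d + r * w ^ d * if η ^ d = 1 then 1 else 0 := by
  have hsplit (b : ℕ) : (η ^ b * if b ≠ 0 then w else 1) ^ d =
      (η ^ d) ^ b * w ^ d + if b = 0 then 1 - w ^ d else 0 := by
    rcases eq_or_ne b 0 with rfl | hb
    · simp
    · simp [hb, mul_pow, ← pow_mul, mul_comm]
  have hηd : (η ^ d) ^ r = 1 := by rw [← pow_mul, mul_comm, pow_mul, hη, one_pow]
  rw [Fin.sum_univ_eq_sum_range (fun b => (η ^ b * if b ≠ 0 then w else 1) ^ d)]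
  simp only [hsplit, Finset.sum_add_distrib, ← Finset.sum_mul, geom_sum_eq_ite_of_pow_eq_one hηd,
    Finset.sum_ite_eq', Finset.mem_range, hr, if_true]
  split_ifs <;> ring

end Sums

lemma IsPrimitiveRoot.pow_div_gcd {M : Type*} [CommMonoid M] {ζ : M} {k : ℕ}
    (h : IsPrimitiveRoot ζ k) (hk : k ≠ 0) (i : ℕ) : IsPrimitiveRoot (ζ ^ i) (k / k.gcd i) := by
  have hord := IsOfFinOrder.orderOf_pow ζ i (h.isOfFinOrder hk)
  rw [← h.eq_orderOf] at hord
  exact hord ▸ IsPrimitiveRoot.orderOf _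

lemma expu_natCast_div (u m : ℕ) :
    expu ((u : ℝ) / m) = Complex.exp (2 * Real.pi * Complex.I / m) ^ u := by
  rw [expu, ← Complex.exp_nat_mul]
  congr 1
  push_cast
  ring

lemma gam_eq_majorIndex_ofFn {n r : ℕ} (x : Fin n → Fin r) : gam x = (List.ofFn x).majorIndex := by
  rw [List.majorIndex_eq_sum, List.length_ofFn, ← Fin.sum_univ_eq_sum_range]
  refine Finset.sum_congr rfl fun i _ => ?_
  simp only [List.descentAt, List.length_ofFn, List.getElem_ofFn, Fin.lt_def, mul_dite, mul_ite,
    mul_one, mul_zero]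

lemma prod_pow_mul_ite_eq_pow_sig_mul_pow_hwt {M : Type*} [CommMonoid M] {n r : ℕ}
    (x : Fin n → Fin r) (η w : M) :
    ∏ i, (η ^ (x i : ℕ) * if (x i : ℕ) ≠ 0 then w else 1) = η ^ sig x * w ^ hwt x := by
  rw [Finset.prod_mul_distrib, Finset.prod_pow_eq_pow_sum, ← Finset.prod_filter,
    Finset.prod_const, sig, hwt]

theorem stmt_12_general (n r : ℕ) (hn : 0 < n) (hr : 0 < r)
    (u₁ u₂ : ℕ) (w : ℂ) :
    ∑ x : Fin n → Fin r,
        expu ((u₁ : ℝ) / (n : ℝ)) ^ gam x * expu ((u₂ : ℝ) / (r : ℝ)) ^ sig x * w ^ hwt x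
      = (1 - w ^ (n / Nat.gcd n u₁) +
          (r : ℂ) * w ^ (n / Nat.gcd n u₁) *
            (if r ∣ (n / Nat.gcd n u₁) * u₂ then 1 else 0)) ^ Nat.gcd n u₁ := by
  set d := n / Nat.gcd n u₁
  have hgn : Nat.gcd n u₁ ∣ n := Nat.gcd_dvd_left n u₁
  have hd : 0 < d := Nat.div_pos (Nat.le_of_dvd hn hgn) (Nat.gcd_pos_of_pos_left u₁ hn)
  have hζ : IsPrimitiveRoot (expu ((u₁ : ℝ) / n)) d := by
    rw [expu_natCast_div]
    exact (Complex.isPrimitiveRoot_exp n hn.ne').pow_div_gcd hn.ne' u₁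
  have hη (k : ℕ) : expu ((u₂ : ℝ) / r) ^ k = 1 ↔ r ∣ k * u₂ := by
    rw [expu_natCast_div, ← pow_mul, (Complex.isPrimitiveRoot_exp r hr.ne').pow_eq_one_iff_dvd,
      mul_comm]
  set t : Fin r → ℂ := fun b => expu ((u₂ : ℝ) / r) ^ (b : ℕ) * if (b : ℕ) ≠ 0 then w else 1
  calc _ = ∑ x : Fin n → Fin r, List.majorWeight (expu ((u₁ : ℝ) / n)) t (List.ofFn x) := by
        refine Finset.sum_congr rfl fun x _ => ?_
        rw [List.majorWeight, List.map_ofFn, List.prod_ofFn, gam_eq_majorIndex_ofFn, mul_assoc,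
          ← prod_pow_mul_ite_eq_pow_sig_mul_pow_hwt]
        rfl
    _ = (∑ b, t b ^ d) ^ (n / d) := sum_majorWeight_ofFn_of_dvd hζ hd t (Nat.div_dvd_of_dvd hgn)
    _ = _ := by
        rw [Nat.div_div_self hgn hn.ne', sum_fin_pow_mul_ite_pow hr ((hη r).2 (dvd_mul_right r u₂))]
        simp only [hη]

theorem stmt_12 (n r : ℕ) (hn : 0 < n) (hr : 0 < r)
    (u₁ u₂ : ℕ) (hu₁ : u₁ < n) (hu₂ : u₂ < r) (w : ℂ) :
    ∑ x : Fin n → Fin r,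
        expu ((u₁ : ℝ) / (n : ℝ)) ^ gam x * expu ((u₂ : ℝ) / (r : ℝ)) ^ sig x * w ^ hwt x
      = (1 - w ^ (n / Nat.gcd n u₁) +
          (r : ℂ) * w ^ (n / Nat.gcd n u₁) *
            (if r ∣ (n / Nat.gcd n u₁) * u₂ then 1 else 0)) ^ Nat.gcd n u₁ :=
  stmt_12_general n r hn hr u₁ u₂ w
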